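/- Let μ > 0, γ > 0, and let ψ : [0, ∞) → ℓ² be a solution of the Salerno model. Then the deformed power is conserved: P_μ(ψ(t)) = P_μ(ψ(0)) for every t ≥ 0. -/

import Mathlib

/-!
Each site term `ln(1 + μ|ψₙ|²)` obeys the local conservation law
`d/dt ln(1 + μ|ψₙ|²) = 2μ (Jₙ₋₁ - Jₙ)` with `Jₙ = Im(conj ψₙ · ψₙ₊₁)`: the factor `1 + μ|ψₙ|²`
in front of the hopping term cancels against the denominator of the logarithmic derivative, and
the on-site term `γ|ψₙ|²ψₙ` contributes nothing. Integrating in time and summing over `n`, the sum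
and the integral may be exchanged by dominated convergence, since `Σₙ |2μ (Jₙ₋₁ - Jₙ)|` is at most
`4μ‖ψ(s)‖²`, which is continuous in `s`; the telescoping sum of the currents vanishes.
-/

open Set

noncomputable section

/-- The Hilbert space ℓ² of square-summable sequences of complex numbers indexed by ℤ. -/
abbrev l2 : Type := lp (fun _ : ℤ => ℂ) 2

/-- `ψ : I → ℓ²` is a solution of the Salerno model
`i ψ̇ₙ + (1 + μ|ψₙ|²)(ψₙ₊₁ + ψₙ₋₁) + γ|ψₙ|²ψₙ = 0` on the set `s`, with derivative curve `ψ'`: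
it is continuously differentiable and satisfies the equation componentwise. -/
def IsSalernoSol (μ γ : ℝ) (s : Set ℝ) (ψ ψ' : ℝ → l2) : Prop :=
  (∀ t ∈ s, HasDerivWithinAt ψ (ψ' t) s t) ∧ ContinuousOn ψ' s ∧
    ∀ t ∈ s, ∀ n : ℤ,
      Complex.I * (ψ' t) n
        + (1 + μ * ‖(ψ t) n‖ ^ 2 : ℝ) * ((ψ t) (n + 1) + (ψ t) (n - 1))
        + (γ * ‖(ψ t) n‖ ^ 2 : ℝ) * (ψ t) n = 0

/-- The deformed power `P_μ(ψ) = Σₙ ln(1 + μ|ψₙ|²)`. -/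
def Pdef (μ : ℝ) (ψ : l2) : ℝ := ∑' n : ℤ, Real.log (1 + μ * ‖ψ n‖ ^ 2)

open MeasureTheory ComplexConjugate Topology

theorem hasSum_sub_of_hasDerivAt_of_dominated {ι E : Type*} [Countable ι]
    [NormedAddCommGroup E] [NormedSpace ℝ E] [CompleteSpace E]
    {f f' : ι → ℝ → E} {g : ℝ → E} {a b : ℝ} (hab : a ≤ b)
    (hf : ∀ n, ContinuousOn (f n) (Icc a b))
    (hf' : ∀ n, ∀ x ∈ Ioo a b, HasDerivAt (f n) (f' n x) x)
    (hint : ∀ n, IntervalIntegrable (f' n) volume a b)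
    (bound : ι → ℝ → ℝ) (h_bound : ∀ n, ∀ x ∈ Icc a b, ‖f' n x‖ ≤ bound n x)
    (bound_summable : ∀ x ∈ Icc a b, Summable fun n => bound n x)
    (bound_integrable : IntervalIntegrable (fun x => ∑' n, bound n x) volume a b)
    (hg : ∀ x ∈ Icc a b, HasSum (fun n => f' n x) (g x)) :
    HasSum (fun n => f n b - f n a) (∫ x in a..b, g x) := by
  have hIcc : ∀ x ∈ uIoc a b, x ∈ Icc a b := fun x hx => by
    rw [uIoc_of_le hab] at hx; exact Ioc_subset_Icc_self hx
  have := intervalIntegral.hasSum_integral_of_dominated_convergence bound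
    (fun n => (hint n).def'.aestronglyMeasurable)
    (fun n => ae_of_all _ fun x hx => h_bound n x (hIcc x hx))
    (ae_of_all _ fun x hx => bound_summable x (hIcc x hx)) bound_integrable
    (ae_of_all _ fun x hx => hg x (hIcc x hx))
  simpa only [intervalIntegral.integral_eq_sub_of_hasDerivAt_of_le hab (hf _) (hf' _) (hint _)]
    using this

theorem HasDerivAt.lp_apply {α : Type*} {E : α → Type*} [∀ i, NormedAddCommGroup (E i)]
    [∀ i, NormedSpace ℝ (E i)] {p : ENNReal} [Fact (1 ≤ p)] {f : ℝ → lp E p} {f' : lp E p}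
    {t : ℝ} (hf : HasDerivAt f f' t) (i : α) : HasDerivAt (fun s => f s i) (f' i) t :=
  (lp.evalCLM ℝ E p i).hasFDerivAt.comp_hasDerivAt t hf

theorem HasDerivAt.log_one_add_mul_norm_sq {μ : ℝ} (hμ : 0 ≤ μ) {z : ℝ → ℂ} {w : ℂ} {t : ℝ}
    (hz : HasDerivAt z w t) :
    HasDerivAt (fun s => Real.log (1 + μ * ‖z s‖ ^ 2))
      (2 * μ * (w * conj (z t)).re / (1 + μ * ‖z t‖ ^ 2)) t := by
  convert ((hz.norm_sq.const_mul μ).const_add 1).log (by positivity) using 1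
  rw [Complex.inner]
  ring

theorem Complex.re_mul_conj_eq_of_salerno_site {μ γ : ℝ} {z w p q : ℂ}
    (h : I * w + ((1 + μ * ‖z‖ ^ 2 : ℝ) : ℂ) * (p + q) + ((γ * ‖z‖ ^ 2 : ℝ) : ℂ) * z = 0) :
    (w * conj z).re = (1 + μ * ‖z‖ ^ 2) * ((conj q * z).im - (conj z * p).im) := by
  have hw : w = I * (((1 + μ * ‖z‖ ^ 2 : ℝ) : ℂ) * (p + q) + ((γ * ‖z‖ ^ 2 : ℝ) : ℂ) * z) := by
    linear_combination (-I) * h + w * I_mul_I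
  rw [hw]
  simp only [mul_re, mul_im, add_re, add_im, I_re, I_im, ofReal_re, ofReal_im, conj_re, conj_im]
  ring

namespace l2

lemma hasSum_norm_sq (φ : l2) : HasSum (fun n => ‖φ n‖ ^ 2) (‖φ‖ ^ 2) := by
  simpa using lp.hasSum_norm (p := 2) (by norm_num) φ

lemma hasSum_norm_sq_add (φ : l2) (c : ℤ) : HasSum (fun n => ‖φ (n + c)‖ ^ 2) (‖φ‖ ^ 2) :=
  (Equiv.addRight c).hasSum_iff.mpr (hasSum_norm_sq φ)

lemma summable_log_one_add_mul_norm_sq (μ : ℝ) (φ : l2) :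
    Summable fun n => Real.log (1 + μ * ‖φ n‖ ^ 2) :=
  Real.summable_log_one_add_of_summable ((hasSum_norm_sq φ).summable.mul_left μ)

def current (φ : l2) (n : ℤ) : ℝ := (conj (φ n) * φ (n + 1)).im

lemma two_mul_abs_current_le (φ : l2) (n : ℤ) :
    2 * |current φ n| ≤ ‖φ n‖ ^ 2 + ‖φ (n + 1)‖ ^ 2 := by
  have h : |current φ n| ≤ ‖φ n‖ * ‖φ (n + 1)‖ := by
    simpa [current] using Complex.abs_im_le_norm (conj (φ n) * φ (n + 1))
  nlinarith [sq_nonneg (‖φ n‖ - ‖φ (n + 1)‖)]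

lemma summable_current (φ : l2) : Summable (current φ) := by
  refine Summable.of_norm_bounded
    (((hasSum_norm_sq φ).add (hasSum_norm_sq_add φ 1)).summable.div_const 2) fun n => ?_
  rw [Real.norm_eq_abs]
  linarith [two_mul_abs_current_le φ n]

lemma hasSum_current_sub (φ : l2) : HasSum (fun n => current φ (n - 1) - current φ n) 0 := by
  have h := (summable_current φ).hasSum
  simpa using ((Equiv.subRight 1).hasSum_iff.mpr h).sub h

lemma norm_mul_current_sub_le {μ : ℝ} (hμ : 0 ≤ μ) (φ : l2) (n : ℤ) :
    ‖2 * μ * (current φ (n - 1) - current φ n)‖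
      ≤ μ * (‖φ (n - 1)‖ ^ 2 + 2 * ‖φ n‖ ^ 2 + ‖φ (n + 1)‖ ^ 2) := by
  have h := two_mul_abs_current_le φ (n - 1)
  rw [sub_add_cancel] at h
  rw [Real.norm_eq_abs, abs_mul, abs_of_nonneg (by positivity), mul_comm 2 μ, mul_assoc]
  gcongr
  linarith [abs_sub (current φ (n - 1)) (current φ n), two_mul_abs_current_le φ n]

lemma hasSum_neighbour_norm_sq (φ : l2) :
    HasSum (fun n => ‖φ (n - 1)‖ ^ 2 + 2 * ‖φ n‖ ^ 2 + ‖φ (n + 1)‖ ^ 2) (4 * ‖φ‖ ^ 2) := by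
  have h := ((hasSum_norm_sq_add φ (-1)).add ((hasSum_norm_sq φ).mul_left 2)).add
    (hasSum_norm_sq_add φ 1)
  convert h using 1
  · simp [sub_eq_add_neg]
  · ring

lemma continuous_apply (n : ℤ) : Continuous fun φ : l2 => φ n :=
  (lp.evalCLM ℂ _ 2 n).continuous

lemma continuous_current (n : ℤ) : Continuous fun φ : l2 => current φ n :=
  Complex.continuous_im.comp
    ((Complex.continuous_conj.comp (continuous_apply n)).mul (continuous_apply (n + 1)))

lemma continuous_log_one_add_mul_norm_sq {μ : ℝ} (hμ : 0 ≤ μ) (n : ℤ) :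
    Continuous fun φ : l2 => Real.log (1 + μ * ‖φ n‖ ^ 2) :=
  (continuous_const.add (continuous_const.mul ((continuous_apply n).norm.pow 2))).log
    fun φ => (by positivity : (0:ℝ) < 1 + μ * ‖φ n‖ ^ 2).ne'

end l2

namespace IsSalernoSol

open l2

variable {μ γ : ℝ} {s : Set ℝ} {ψ ψ' : ℝ → l2}

lemma continuousOn (hψ : IsSalernoSol μ γ s ψ ψ') : ContinuousOn ψ s :=
  fun t ht => (hψ.1 t ht).continuousWithinAt

lemma hasDerivAt_log_one_add_mul_norm_sq (hψ : IsSalernoSol μ γ s ψ ψ') (hμ : 0 ≤ μ) {t : ℝ}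
    (hs : s ∈ 𝓝 t) (n : ℤ) :
    HasDerivAt (fun τ => Real.log (1 + μ * ‖ψ τ n‖ ^ 2))
      (2 * μ * (current (ψ t) (n - 1) - current (ψ t) n)) t := by
  convert (((hψ.1 t (mem_of_mem_nhds hs)).hasDerivAt hs).lp_apply n).log_one_add_mul_norm_sq hμ
    using 1
  rw [Complex.re_mul_conj_eq_of_salerno_site (hψ.2.2 t (mem_of_mem_nhds hs) n), current,
    current, sub_add_cancel]
  field_simp

end IsSalernoSol

theorem Salerno_deformed_power_conserved_general (μ γ : ℝ) (hμ : 0 < μ)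
    (ψ ψ' : ℝ → l2) (hψ : IsSalernoSol μ γ (Ici 0) ψ ψ') :
    ∀ t : ℝ, 0 ≤ t → Pdef μ (ψ t) = Pdef μ (ψ 0) := by
  intro t ht
  have hcont : ContinuousOn ψ (Icc 0 t) := hψ.continuousOn.mono Icc_subset_Ici_self
  have hflux (n : ℤ) : ContinuousOn
      (fun s => 2 * μ * (l2.current (ψ s) (n - 1) - l2.current (ψ s) n)) (Icc 0 t) :=
    continuousOn_const.mul (((l2.continuous_current _).comp_continuousOn hcont).sub
      ((l2.continuous_current _).comp_continuousOn hcont))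
  have hmass : (fun s => ∑' n, μ * (‖ψ s (n - 1)‖ ^ 2 + 2 * ‖ψ s n‖ ^ 2 + ‖ψ s (n + 1)‖ ^ 2))
      = fun s => μ * (4 * ‖ψ s‖ ^ 2) :=
    funext fun s => ((l2.hasSum_neighbour_norm_sq (ψ s)).mul_left μ).tsum_eq
  have hsum : HasSum
      (fun n => Real.log (1 + μ * ‖ψ t n‖ ^ 2) - Real.log (1 + μ * ‖ψ 0 n‖ ^ 2)) 0 := by
    simpa using hasSum_sub_of_hasDerivAt_of_dominated ht
      (fun n => (l2.continuous_log_one_add_mul_norm_sq hμ.le n).comp_continuousOn hcont)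
      (fun n s hs => hψ.hasDerivAt_log_one_add_mul_norm_sq hμ.le (Ici_mem_nhds hs.1) n)
      (fun n => (hflux n).intervalIntegrable_of_Icc ht) _
      (fun n s _ => l2.norm_mul_current_sub_le hμ.le (ψ s) n)
      (fun s _ => ((l2.hasSum_neighbour_norm_sq (ψ s)).mul_left μ).summable)
      (hmass ▸ (continuousOn_const.mul (continuousOn_const.mul
        (hcont.norm.pow 2))).intervalIntegrable_of_Icc ht)
      (fun s _ => (l2.hasSum_current_sub (ψ s)).mul_left (2 * μ))
  exact sub_eq_zero.mp (((l2.summable_log_one_add_mul_norm_sq μ (ψ t)).hasSum.sub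
    (l2.summable_log_one_add_mul_norm_sq μ (ψ 0)).hasSum).unique hsum)

/-- The deformed power `P_μ` is conserved along solutions of the Salerno model. -/
theorem Salerno_deformed_power_conserved (μ γ : ℝ) (hμ : 0 < μ) (hγ : 0 < γ)
    (ψ ψ' : ℝ → l2) (hψ : IsSalernoSol μ γ (Ici 0) ψ ψ') :
    ∀ t : ℝ, 0 ≤ t → Pdef μ (ψ t) = Pdef μ (ψ 0) :=
  Salerno_deformed_power_conserved_general μ γ hμ ψ ψ' hψ
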